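/- arXiv:2106.01761 — 4 statements merged into one kernel-verified Lean document; each statement's English description precedes it below -/
import Mathlib

section
/- Let f : X × Y → ℝ be (μ_x, μ_y)-convex-concave with μ_x, μ_y > 0, where X ⊆ ℝ^{d_x} and Y ⊆ ℝ^{d_y} are nonempty closed convex sets, let β ≥ 0, and let u_1, u_2 ∈ ℝ^{d_x}. For j = 1, 2 let (x_j*, y_j*) be the saddle point of F_j(x, y) = f(x, y) + (β/2)‖x − u_j‖² over X × Y. Then ((μ_x + β)/2)‖x_1* − x_2*‖² + (μ_y/2)‖y_1* − y_2*‖² ≤ β⟨x_2* − x_1*, u_2 − u_1⟩; in particular, ‖x_1* − x_2*‖² + ‖y_1* − y_2*‖² ≤ (β / min{μ_x, μ_y})·‖u_1 − u_2‖². -/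
open scoped RealInnerProductSpace

lemma normsq_combo {E : Type*} [NormedAddCommGroup E] [InnerProductSpace ℝ E]
    (x y : E) {a b : ℝ} (hab : a + b = 1) :
    ‖a • x + b • y‖ ^ 2 = a * ‖x‖ ^ 2 + b * ‖y‖ ^ 2 - a * b * ‖x - y‖ ^ 2 := by
  have h1 : ∀ v : E, ‖v‖ ^ 2 = ⟪v, v⟫ := fun v => (real_inner_self_eq_norm_sq v).symm
  simp only [h1]
  simp only [inner_add_add_self, inner_sub_sub_self, real_inner_smul_left,
    real_inner_smul_right]
  linear_combination (a * (⟪x, x⟫ : ℝ) + b * ⟪y, y⟫) * hab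

lemma quad_growth {E : Type*} [NormedAddCommGroup E] [InnerProductSpace ℝ E]
    {s : Set E} {m : ℝ} {g : E → ℝ} (hg : StrongConvexOn s m g) {x z : E}
    (hx : x ∈ s) (hz : z ∈ s) (hmin : ∀ w ∈ s, g x ≤ g w) :
    g x + m / 2 * ‖z - x‖ ^ 2 ≤ g z := by
  have key : ∀ t : ℝ, t ∈ Set.Ioo (0:ℝ) 1 →
      g x + (1 - t) * (m / 2 * ‖z - x‖ ^ 2) ≤ g z := by
    intro t ht
    have h1 := hg.2 hz hx ht.1.le (by linarith [ht.2] : (0:ℝ) ≤ 1 - t) (by ring)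
    have h2 := hmin _ (hg.1 hz hx ht.1.le (show (0:ℝ) ≤ 1 - t by linarith [ht.2]) (by ring))
    simp only [smul_eq_mul] at h1
    nlinarith [ht.1]
  have hlim : Filter.Tendsto (fun t : ℝ => g x + (1 - t) * (m / 2 * ‖z - x‖ ^ 2))
      (nhdsWithin 0 (Set.Ioi 0)) (nhds (g x + (1 - 0) * (m / 2 * ‖z - x‖ ^ 2))) :=
    ((continuous_const.add ((continuous_const.sub continuous_id).mul
      continuous_const)).tendsto 0).mono_left nhdsWithin_le_nhds
  have hev : ∀ᶠ t in nhdsWithin (0:ℝ) (Set.Ioi 0),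
      g x + (1 - t) * (m / 2 * ‖z - x‖ ^ 2) ≤ g z := by
    filter_upwards [Ioo_mem_nhdsGT_of_mem (Set.left_mem_Ico.2 one_pos)] with t ht
      using key t ht
  simpa using le_of_tendsto hlim hev

lemma quad_growth_max {E : Type*} [NormedAddCommGroup E] [InnerProductSpace ℝ E]
    {s : Set E} {m : ℝ} {g : E → ℝ} (hg : StrongConcaveOn s m g) {x z : E}
    (hx : x ∈ s) (hz : z ∈ s) (hmax : ∀ w ∈ s, g w ≤ g x) :
    g z + m / 2 * ‖z - x‖ ^ 2 ≤ g x := by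
  have := quad_growth (g := -g) hg.neg hx hz (fun w hw => neg_le_neg (hmax w hw))
  simp only [Pi.neg_apply] at this
  linarith

lemma strongConvexOn_add_sq {E : Type*} [NormedAddCommGroup E] [InnerProductSpace ℝ E]
    {s : Set E} (hs : Convex ℝ s) {m β : ℝ} {g : E → ℝ}
    (hg : StrongConvexOn s m g) (u : E) :
    StrongConvexOn s (m + β) (fun x => g x + β / 2 * ‖x - u‖ ^ 2) := by
  refine ⟨hs, fun x hx y hy a b ha hb hab => ?_⟩
  have h1 := hg.2 hx hy ha hb hab
  have h3 : a • u + b • u = u := by rw [← add_smul, hab, one_smul]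
  have h2 : a • x + b • y - u = a • (x - u) + b • (y - u) := by
    match_scalars <;> linarith
  have h4 : ‖a • x + b • y - u‖ ^ 2
      = a * ‖x - u‖ ^ 2 + b * ‖y - u‖ ^ 2 - a * b * ‖x - y‖ ^ 2 := by
    rw [h2, normsq_combo _ _ hab, sub_sub_sub_cancel_right]
  simp only [smul_eq_mul] at h1 ⊢
  rw [h4]
  linarith [h1]


set_option maxHeartbeats 1600000 in
/-- Let `f : X × Y → ℝ` be `(μₓ, μ_y)`-convex-concave with `μₓ, μ_y > 0`,
`β ≥ 0`, `u₁, u₂ ∈ ℝ^{dₓ}`, and for `j = 1, 2` let `(xⱼ*, yⱼ*)` be the saddle point of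
`Fⱼ(x, y) = f(x, y) + (β/2)‖x − uⱼ‖²` over `X × Y`. Then
`((μₓ+β)/2)‖x₁* − x₂*‖² + (μ_y/2)‖y₁* − y₂*‖² ≤ β⟨x₂* − x₁*, u₂ − u₁⟩`, and in particular
`‖x₁* − x₂*‖² + ‖y₁* − y₂*‖² ≤ (β / min{μₓ, μ_y}) ‖u₁ − u₂‖²`. -/
theorem saddle_points_of_shifted_regularization
    {dx dy : ℕ}
    (X : Set (EuclideanSpace ℝ (Fin dx))) (Y : Set (EuclideanSpace ℝ (Fin dy)))
    (hXne : X.Nonempty) (hXcl : IsClosed X) (hXcv : Convex ℝ X)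
    (hYne : Y.Nonempty) (hYcl : IsClosed Y) (hYcv : Convex ℝ Y)
    (f : EuclideanSpace ℝ (Fin dx) → EuclideanSpace ℝ (Fin dy) → ℝ)
    (μx μy : ℝ) (hμx : 0 < μx) (hμy : 0 < μy)
    (hconv : ∀ y ∈ Y, StrongConvexOn X μx (fun x => f x y))
    (hconc : ∀ x ∈ X, StrongConcaveOn Y μy (f x))
    (β : ℝ) (hβ : 0 ≤ β)
    (u₁ u₂ : EuclideanSpace ℝ (Fin dx))
    (F : EuclideanSpace ℝ (Fin dx) → EuclideanSpace ℝ (Fin dx) → EuclideanSpace ℝ (Fin dy) → ℝ)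
    (hF : F = fun u x y => f x y + β / 2 * ‖x - u‖ ^ 2)
    (x₁ : EuclideanSpace ℝ (Fin dx)) (y₁ : EuclideanSpace ℝ (Fin dy))
    (hx₁ : x₁ ∈ X) (hy₁ : y₁ ∈ Y)
    (hsaddle₁ : ∀ x ∈ X, ∀ y ∈ Y, F u₁ x₁ y ≤ F u₁ x₁ y₁ ∧ F u₁ x₁ y₁ ≤ F u₁ x y₁)
    (x₂ : EuclideanSpace ℝ (Fin dx)) (y₂ : EuclideanSpace ℝ (Fin dy))
    (hx₂ : x₂ ∈ X) (hy₂ : y₂ ∈ Y)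
    (hsaddle₂ : ∀ x ∈ X, ∀ y ∈ Y, F u₂ x₂ y ≤ F u₂ x₂ y₂ ∧ F u₂ x₂ y₂ ≤ F u₂ x y₂) :
    (μx + β) / 2 * ‖x₁ - x₂‖ ^ 2 + μy / 2 * ‖y₁ - y₂‖ ^ 2 ≤ β * ⟪x₂ - x₁, u₂ - u₁⟫ ∧
    ‖x₁ - x₂‖ ^ 2 + ‖y₁ - y₂‖ ^ 2 ≤ β / min μx μy * ‖u₁ - u₂‖ ^ 2 := by
  subst hF
  simp only at hsaddle₁ hsaddle₂
  -- strong convexity of the regularized objectives in x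
  have hg₁ : StrongConvexOn X (μx + β) (fun x => f x y₁ + β / 2 * ‖x - u₁‖ ^ 2) :=
    strongConvexOn_add_sq hXcv (hconv y₁ hy₁) u₁
  have hg₂ : StrongConvexOn X (μx + β) (fun x => f x y₂ + β / 2 * ‖x - u₂‖ ^ 2) :=
    strongConvexOn_add_sq hXcv (hconv y₂ hy₂) u₂
  have A1 := quad_growth hg₁ hx₁ hx₂ (fun w hw => (hsaddle₁ w hw y₁ hy₁).2)
  have A3 := quad_growth hg₂ hx₂ hx₁ (fun w hw => (hsaddle₂ w hw y₂ hy₂).2)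
  have A2 := quad_growth_max (hconc x₁ hx₁) hy₁ hy₂
    (fun w hw => by have := (hsaddle₁ x₁ hx₁ w hw).1; simpa using this)
  have A4 := quad_growth_max (hconc x₂ hx₂) hy₂ hy₁
    (fun w hw => by have := (hsaddle₂ x₂ hx₂ w hw).1; simpa using this)
  -- algebraic identity on the norms
  have hid : ‖x₂ - u₁‖ ^ 2 - ‖x₁ - u₁‖ ^ 2 + ‖x₁ - u₂‖ ^ 2 - ‖x₂ - u₂‖ ^ 2
      = 2 * ⟪x₂ - x₁, u₂ - u₁⟫ := by
    have h1 : ∀ v : EuclideanSpace ℝ (Fin dx), ‖v‖ ^ 2 = ⟪v, v⟫ :=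
      fun v => (real_inner_self_eq_norm_sq v).symm
    simp only [h1, inner_sub_sub_self, inner_sub_left, inner_sub_right]
    rw [real_inner_comm x₂ u₁, real_inner_comm x₁ u₁, real_inner_comm x₁ u₂,
      real_inner_comm x₂ u₂]
    ring
  have hn1 : ‖x₂ - x₁‖ = ‖x₁ - x₂‖ := norm_sub_rev _ _
  have hn2 : ‖y₂ - y₁‖ = ‖y₁ - y₂‖ := norm_sub_rev _ _
  rw [hn1] at A1
  rw [hn2] at A2
  have hK : (μx + β) * ‖x₁ - x₂‖ ^ 2 + μy * ‖y₁ - y₂‖ ^ 2 ≤ β * ⟪x₂ - x₁, u₂ - u₁⟫ := by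
    nlinarith [A1, A2, A3, A4, hid]
  constructor
  · nlinarith [hK, mul_nonneg (by linarith : (0:ℝ) ≤ μx + β) (sq_nonneg ‖x₁ - x₂‖),
      mul_nonneg hμy.le (sq_nonneg ‖y₁ - y₂‖)]
  · have hm : 0 < min μx μy := lt_min hμx hμy
    have hcs : ⟪x₂ - x₁, u₂ - u₁⟫ ≤ ‖x₂ - x₁‖ * ‖u₂ - u₁‖ := real_inner_le_norm _ _
    rw [hn1, norm_sub_rev u₂ u₁] at hcs
    have h5 : β * ⟪x₂ - x₁, u₂ - u₁⟫ ≤ β / 2 * ‖x₁ - x₂‖ ^ 2 + β / 2 * ‖u₁ - u₂‖ ^ 2 := by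
      nlinarith [mul_le_mul_of_nonneg_left hcs hβ,
        mul_nonneg hβ (sq_nonneg (‖x₁ - x₂‖ - ‖u₁ - u₂‖))]
    have e1 : min μx μy * ‖x₁ - x₂‖ ^ 2 ≤ (μx + β / 2) * ‖x₁ - x₂‖ ^ 2 :=
      mul_le_mul_of_nonneg_right (by linarith [min_le_left μx μy]) (sq_nonneg _)
    have e2 : min μx μy * ‖y₁ - y₂‖ ^ 2 ≤ μy * ‖y₁ - y₂‖ ^ 2 :=
      mul_le_mul_of_nonneg_right (min_le_right μx μy) (sq_nonneg _)
    have h6 : min μx μy * (‖x₁ - x₂‖ ^ 2 + ‖y₁ - y₂‖ ^ 2) ≤ β / 2 * ‖u₁ - u₂‖ ^ 2 := by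
      linarith [hK, h5, e1, e2]
    have h7 : (‖x₁ - x₂‖ ^ 2 + ‖y₁ - y₂‖ ^ 2) * min μx μy ≤ β * ‖u₁ - u₂‖ ^ 2 := by
      linarith [h6, mul_nonneg hβ (sq_nonneg ‖u₁ - u₂‖)]
    have hmne : min μx μy ≠ 0 := ne_of_gt hm
    calc ‖x₁ - x₂‖ ^ 2 + ‖y₁ - y₂‖ ^ 2
        = (‖x₁ - x₂‖ ^ 2 + ‖y₁ - y₂‖ ^ 2) * min μx μy / min μx μy := by field_simp
      _ ≤ β * ‖u₁ - u₂‖ ^ 2 / min μx μy := by gcongr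
      _ = β / min μx μy * ‖u₁ - u₂‖ ^ 2 := by ring
end

section
/- Fix α > 0 and d ≥ 1, let ω = (√(α² + 4) − α)/2, let B ∈ ℝ^{d×d} be the lower bidiagonal matrix with B_{ii} = 1 for i = 1,…,d−1, B_{dd} = √(αω), B_{i+1,i} = −1 for i = 1,…,d−1, and all other entries zero, let c = (ω, 0, …, 0)ᵀ ∈ ℝ^d, and define H : ℝ^d × ℝ^d → ℝ by H(x, y) = (α/2)‖x‖² + xᵀ(By − c) − (α/2)‖y‖². Then H is √(8 + 2α²)-smooth, i.e., the map (x, y) ↦ (∇_x H(x,y), ∇_y H(x,y)) is √(8 + 2α²)-Lipschitz on ℝ^d × ℝ^d. -/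
/-!
The partial gradients are `∇ₓH = α x + (B y - c)` and `∇_y H = Bᵀ x - α y`, so the gradient
differences are `α Δx + B Δy` and `Bᵀ Δx - α Δy`; with `‖a + b‖² ≤ 2‖a‖² + 2‖b‖²` the squared
Lipschitz constant is at most `2α² + 2‖B‖²`. Since `α ω ≤ 1`, `B` is lower bidiagonal with
entries in `[-1, 1]`, so its absolute row and column sums are at most `2`, and the Schur test
gives `‖B‖ ≤ 2`.
-/

open Matrix WithLp RealInnerProductSpace

section Gradient

variable {E : Type*} [NormedAddCommGroup E] [InnerProductSpace ℝ E] [CompleteSpace E]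

theorem hasGradientAt_half_mul_norm_sq_add_inner (a : ℝ) (b : E) (C : ℝ) (u : E) :
    HasGradientAt (fun v => a / 2 * ‖v‖ ^ 2 + ⟪b, v⟫ + C) (a • u + b) u := by
  rw [hasGradientAt_iff_hasFDerivAt]
  refine ((((hasStrictFDerivAt_norm_sq u).hasFDerivAt.const_mul (a / 2)).add
    (innerSL ℝ b).hasFDerivAt).add_const C).congr_fderiv ?_
  ext v
  simp
  ring

end Gradient

theorem norm_add_sq_le_two_mul {E : Type*} [SeminormedAddCommGroup E] (u v : E) :
    ‖u + v‖ ^ 2 ≤ 2 * (‖u‖ ^ 2 + ‖v‖ ^ 2) :=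
  (pow_le_pow_left₀ (norm_nonneg _) (norm_add_le u v) 2).trans add_sq_le

section Schur

variable {m n : Type*} [Fintype n]

theorem Matrix.mulVec_apply_sq_le (M : Matrix m n ℝ) (v : n → ℝ) (i : m) :
    (M *ᵥ v) i ^ 2 ≤ (∑ j, |M i j|) * ∑ j, |M i j| * v j ^ 2 :=
  Finset.sum_sq_le_sum_mul_sum_of_sq_le_mul _ (fun _ _ => abs_nonneg _)
    (fun _ _ => by positivity) fun j _ => le_of_eq (by rw [mul_pow, ← sq_abs (M i j)]; ring)

theorem Matrix.norm_toLp_mulVec_sq_le [Fintype m] (M : Matrix m n ℝ) {r s : ℝ} (hr₀ : 0 ≤ r)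
    (hr : ∀ i, ∑ j, |M i j| ≤ r) (hs : ∀ j, ∑ i, |M i j| ≤ s) (v : EuclideanSpace ℝ n) :
    ‖toLp 2 (M *ᵥ ofLp v)‖ ^ 2 ≤ r * s * ‖v‖ ^ 2 := by
  simp only [EuclideanSpace.real_norm_sq_eq]
  calc ∑ i, (M *ᵥ ofLp v) i ^ 2
      ≤ ∑ i, r * ∑ j, |M i j| * v j ^ 2 := by
        gcongr with i
        exact (M.mulVec_apply_sq_le _ i).trans
          (mul_le_mul_of_nonneg_right (hr i) (by positivity))
    _ = r * ∑ j, (∑ i, |M i j|) * v j ^ 2 := by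
        rw [← Finset.mul_sum, Finset.sum_comm]; simp only [Finset.sum_mul]
    _ ≤ r * ∑ j, s * v j ^ 2 := by gcongr with j; exact hs j
    _ = r * s * ∑ j, v j ^ 2 := by rw [← Finset.mul_sum, mul_assoc]

end Schur

theorem Fintype.sum_boole_le_one {ι : Type*} [Fintype ι] {P : ι → Prop} [DecidablePred P]
    (hP : ∀ a b, P a → P b → a = b) : ∑ j, (if P j then (1 : ℝ) else 0) ≤ 1 := by
  rw [Finset.sum_boole]
  exact_mod_cast Finset.card_le_one.mpr fun a ha b hb =>
    hP a b (Finset.mem_filter.mp ha).2 (Finset.mem_filter.mp hb).2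

section Bidiagonal

variable {d : ℕ} {M : Matrix (Fin d) (Fin d) ℝ}

theorem Matrix.abs_le_of_bidiagonal (h_abs : ∀ i j, |M i j| ≤ 1)
    (h_zero : ∀ i j : Fin d, i ≠ j → (i : ℕ) ≠ j + 1 → M i j = 0) (i j : Fin d) :
    |M i j| ≤ (if i = j then 1 else 0) + (if (i : ℕ) = j + 1 then 1 else 0) := by
  by_cases hij : i = j
  · simpa [hij] using h_abs j j
  · by_cases hsub : (i : ℕ) = j + 1
    · simpa [hij, hsub] using h_abs i j
    · simp [hij, hsub, h_zero i j hij hsub]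

theorem Matrix.sum_abs_row_le_two_of_bidiagonal (h_abs : ∀ i j, |M i j| ≤ 1)
    (h_zero : ∀ i j : Fin d, i ≠ j → (i : ℕ) ≠ j + 1 → M i j = 0) (i : Fin d) :
    ∑ j, |M i j| ≤ 2 := by
  calc ∑ j, |M i j|
      ≤ ∑ j, ((if i = j then 1 else 0) + (if (i : ℕ) = j + 1 then 1 else 0)) :=
        Finset.sum_le_sum fun j _ => abs_le_of_bidiagonal h_abs h_zero i j
    _ ≤ 1 + 1 := by
        rw [Finset.sum_add_distrib, Finset.sum_ite_eq]
        exact add_le_add (by simp) (Fintype.sum_boole_le_one fun a b ha hb => Fin.ext (by omega))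
    _ = 2 := one_add_one_eq_two

theorem Matrix.sum_abs_col_le_two_of_bidiagonal (h_abs : ∀ i j, |M i j| ≤ 1)
    (h_zero : ∀ i j : Fin d, i ≠ j → (i : ℕ) ≠ j + 1 → M i j = 0) (j : Fin d) :
    ∑ i, |M i j| ≤ 2 := by
  calc ∑ i, |M i j|
      ≤ ∑ i, ((if i = j then 1 else 0) + (if (i : ℕ) = j + 1 then 1 else 0)) :=
        Finset.sum_le_sum fun i _ => abs_le_of_bidiagonal h_abs h_zero i j
    _ ≤ 1 + 1 := by
        rw [Finset.sum_add_distrib, Finset.sum_ite_eq']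
        exact add_le_add (by simp) (Fintype.sum_boole_le_one fun a b ha hb => Fin.ext (by omega))
    _ = 2 := one_add_one_eq_two

end Bidiagonal

section Saddle

variable {m n : Type*} [Fintype m] [Fintype n]

noncomputable def saddleQuadratic (α : ℝ) (B : Matrix m n ℝ) (c : m → ℝ)
    (x : EuclideanSpace ℝ m) (y : EuclideanSpace ℝ n) : ℝ :=
  α / 2 * ‖x‖ ^ 2 + ofLp x ⬝ᵥ (B *ᵥ ofLp y - c) - α / 2 * ‖y‖ ^ 2

variable (α : ℝ) (B : Matrix m n ℝ) (c : m → ℝ)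

theorem gradient_saddleQuadratic_left (x : EuclideanSpace ℝ m) (y : EuclideanSpace ℝ n) :
    gradient (saddleQuadratic α B c · y) x = α • x + toLp 2 (B *ᵥ ofLp y - c) := by
  apply HasGradientAt.gradient
  convert hasGradientAt_half_mul_norm_sq_add_inner α (toLp 2 (B *ᵥ ofLp y - c))
    (-(α / 2 * ‖y‖ ^ 2)) x using 2 with u
  simp [saddleQuadratic, EuclideanSpace.inner_eq_star_dotProduct, dotProduct_comm]
  ring

theorem gradient_saddleQuadratic_right (x : EuclideanSpace ℝ m) (y : EuclideanSpace ℝ n) :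
    gradient (saddleQuadratic α B c x ·) y = -α • y + toLp 2 (Bᵀ *ᵥ ofLp x) := by
  apply HasGradientAt.gradient
  convert hasGradientAt_half_mul_norm_sq_add_inner (-α) (toLp 2 (Bᵀ *ᵥ ofLp x))
    (α / 2 * ‖x‖ ^ 2 - ofLp x ⬝ᵥ c) y using 2 with v
  simp [saddleQuadratic, EuclideanSpace.inner_eq_star_dotProduct, dotProduct_sub,
    dotProduct_mulVec, mulVec_transpose, dotProduct_comm]
  ring

theorem saddleQuadratic_gradient_lipschitz {L : ℝ} (hL : 0 ≤ L) (hr : ∀ i, ∑ j, |B i j| ≤ L)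
    (hs : ∀ j, ∑ i, |B i j| ≤ L) (x x' : EuclideanSpace ℝ m) (y y' : EuclideanSpace ℝ n) :
    √(‖gradient (saddleQuadratic α B c · y) x - gradient (saddleQuadratic α B c · y') x'‖ ^ 2 +
        ‖gradient (saddleQuadratic α B c x ·) y - gradient (saddleQuadratic α B c x' ·) y'‖ ^ 2)
      ≤ √(2 * α ^ 2 + 2 * L ^ 2) * √(‖x - x'‖ ^ 2 + ‖y - y'‖ ^ 2) := by
  have hx : gradient (saddleQuadratic α B c · y) x - gradient (saddleQuadratic α B c · y') x' =
      α • (x - x') + toLp 2 (B *ᵥ ofLp (y - y')) := by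
    simp only [gradient_saddleQuadratic_left, WithLp.ofLp_sub, mulVec_sub, smul_sub,
      WithLp.toLp_sub]
    abel
  have hy : gradient (saddleQuadratic α B c x ·) y - gradient (saddleQuadratic α B c x' ·) y' =
      -α • (y - y') + toLp 2 (Bᵀ *ᵥ ofLp (x - x')) := by
    simp only [gradient_saddleQuadratic_right, WithLp.ofLp_sub, mulVec_sub, smul_sub,
      WithLp.toLp_sub]
    abel
  have hBy := B.norm_toLp_mulVec_sq_le hL hr hs (y - y')
  have hBx := Bᵀ.norm_toLp_mulVec_sq_le hL hs hr (x - x')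
  have hx2 := norm_add_sq_le_two_mul (α • (x - x')) (toLp 2 (B *ᵥ ofLp (y - y')))
  have hy2 := norm_add_sq_le_two_mul (-α • (y - y')) (toLp 2 (Bᵀ *ᵥ ofLp (x - x')))
  rw [norm_smul, mul_pow, Real.norm_eq_abs, sq_abs] at hx2 hy2
  rw [← Real.sqrt_mul (by positivity), hx, hy]
  apply Real.sqrt_le_sqrt
  linarith

end Saddle

theorem mul_sqrt_sq_add_four_sub_div_two_le_one (α : ℝ) : α * ((√(α ^ 2 + 4) - α) / 2) ≤ 1 := by
  nlinarith [Real.sq_sqrt (show (0 : ℝ) ≤ α ^ 2 + 4 by positivity), Real.sqrt_nonneg (α ^ 2 + 4)]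

theorem hard_instance_H_smooth_general
    {d : ℕ} (α : ℝ)
    (ω : ℝ) (hω : ω = (Real.sqrt (α ^ 2 + 4) - α) / 2)
    (B : Fin d → Fin d → ℝ)
    (hB : B = fun (i j : Fin d) =>
      if i = j then (if (i : ℕ) = d - 1 then Real.sqrt (α * ω) else 1)
      else if (i : ℕ) = (j : ℕ) + 1 then -1 else 0)
    (c : Fin d → ℝ)
    (H : EuclideanSpace ℝ (Fin d) → EuclideanSpace ℝ (Fin d) → ℝ)
    (hH : H = fun x y =>
      α / 2 * ‖x‖ ^ 2 + (∑ i, x i * ((∑ j, B i j * y j) - c i)) - α / 2 * ‖y‖ ^ 2) :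
    ∀ x x' y y' : EuclideanSpace ℝ (Fin d),
      Real.sqrt (‖gradient (fun u => H u y) x - gradient (fun u => H u y') x'‖ ^ 2 +
          ‖gradient (fun v => H x v) y - gradient (fun v => H x' v) y'‖ ^ 2)
        ≤ Real.sqrt (8 + 2 * α ^ 2) * Real.sqrt (‖x - x'‖ ^ 2 + ‖y - y'‖ ^ 2) := by
  have hαω : √(α * ω) ≤ 1 := Real.sqrt_le_one.mpr (hω ▸ mul_sqrt_sq_add_four_sub_div_two_le_one α)
  have hB_abs : ∀ i j, |B i j| ≤ 1 := by
    intro i j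
    simp only [hB]
    split_ifs <;> simp [abs_of_nonneg, hαω]
  have hB_zero : ∀ i j : Fin d, i ≠ j → (i : ℕ) ≠ j + 1 → B i j = 0 := by
    intro i j hij hsub
    simp [hB, hij, hsub]
  have hH' : H = saddleQuadratic α B c := hH
  subst hH'
  intro x x' y y'
  rw [show 8 + 2 * α ^ 2 = 2 * α ^ 2 + 2 * 2 ^ 2 by ring]
  exact saddleQuadratic_gradient_lipschitz α B c zero_le_two
    (sum_abs_row_le_two_of_bidiagonal hB_abs hB_zero)
    (sum_abs_col_le_two_of_bidiagonal hB_abs hB_zero) x x' y y'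

/-- For `α > 0`, `d ≥ 1`, `ω = (√(α²+4) − α)/2`, with `B` the lower
bidiagonal matrix (`B_{ii} = 1` for `i < d`, `B_{dd} = √(αω)`, `B_{i+1,i} = −1`) and
`c = (ω, 0, …, 0)ᵀ`, the function `H(x,y) = (α/2)‖x‖² + xᵀ(By − c) − (α/2)‖y‖²` is
`√(8 + 2α²)`-smooth on `ℝ^d × ℝ^d`. -/
theorem hard_instance_H_smooth
    {d : ℕ} (hd : 1 ≤ d) (α : ℝ) (hα : 0 < α)
    (ω : ℝ) (hω : ω = (Real.sqrt (α ^ 2 + 4) - α) / 2)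
    (B : Fin d → Fin d → ℝ)
    (hB : B = fun (i j : Fin d) =>
      if i = j then (if (i : ℕ) = d - 1 then Real.sqrt (α * ω) else 1)
      else if (i : ℕ) = (j : ℕ) + 1 then -1 else 0)
    (c : Fin d → ℝ) (hc : c = fun (i : Fin d) => if (i : ℕ) = 0 then ω else 0)
    (H : EuclideanSpace ℝ (Fin d) → EuclideanSpace ℝ (Fin d) → ℝ)
    (hH : H = fun x y =>
      α / 2 * ‖x‖ ^ 2 + (∑ i, x i * ((∑ j, B i j * y j) - c i)) - α / 2 * ‖y‖ ^ 2) :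
    ∀ x x' y y' : EuclideanSpace ℝ (Fin d),
      Real.sqrt (‖gradient (fun u => H u y) x - gradient (fun u => H u y') x'‖ ^ 2 +
          ‖gradient (fun v => H x v) y - gradient (fun v => H x' v) y'‖ ^ 2)
        ≤ Real.sqrt (8 + 2 * α ^ 2) * Real.sqrt (‖x - x'‖ ^ 2 + ‖y - y'‖ ^ 2) :=
  hard_instance_H_smooth_general α ω hω B hB c H hH
end

section
/- Fix α > 0 and d ≥ 1, let ω = (√(α² + 4) − α)/2, q = (2 + α² − α√(α² + 4))/2 (so 0 < q < 1), and let (x*, y*) with x* = (q, q², …, q^d)ᵀ and y* = ω·(q, q², …, q^{d−1}, q^d/√(1−q))ᵀ be the saddle point of H(x, y) = (α/2)‖x‖² + xᵀ(By − c) − (α/2)‖y‖², with B and c as in the hard-instance construction. Let F_k = span{e_1, …, e_k} (and F_0 = {0}). Then for any integer 0 ≤ k ≤ d/2 and any (x, y) ∈ F_k × F_k, (‖x − x*‖² + ‖y − y*‖²)/(‖x*‖² + ‖y*‖²) ≥ q^{2k}/2. -/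
lemma tailSum (m k : ℕ) (q : ℝ) (hq0 : 0 < q) (hq1 : q < 1) (hk : k ≤ m) :
    ∑ i ∈ Finset.Ico k (m + 1),
      (if i = m then q ^ (2 * (m + 1)) / (1 - q) else (1 + q) * q ^ (2 * (i + 1)))
      = q ^ (2 * k + 2) / (1 - q) := by
  rw [Finset.sum_Ico_succ_top hk, if_pos rfl]
  have h1 : ∀ i ∈ Finset.Ico k m,
      (if i = m then q ^ (2 * (m + 1)) / (1 - q) else (1 + q) * q ^ (2 * (i + 1)))
      = ((1 + q) * q ^ 2) * (q ^ 2) ^ i := by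
    intro i hi
    rw [if_neg (Nat.ne_of_lt (Finset.mem_Ico.mp hi).2)]
    ring
  rw [Finset.sum_congr rfl h1, ← Finset.mul_sum]
  have hne : (q ^ 2 : ℝ) ≠ 1 := by nlinarith
  rw [geom_sum_Ico hne hk]
  have h2 : (1 : ℝ) - q ≠ 0 := by linarith
  have h3 : (q ^ 2 : ℝ) - 1 ≠ 0 := sub_ne_zero.mpr hne
  field_simp
  ring

/-- For `α > 0`, `d ≥ 1`, `ω = (√(α²+4) − α)/2`,
`q = (2+α²−α√(α²+4))/2` (so `0 < q < 1`), let `x* = (q, …, q^d)` and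
`y* = ω(q, …, q^{d−1}, q^d/√(1−q))` be the saddle point of the hard instance `H`.
Then for any `0 ≤ k ≤ d/2` and any `(x, y) ∈ F_k × F_k` (where `F_k = span{e₁,…,e_k}`),
`(‖x − x*‖² + ‖y − y*‖²)/(‖x*‖² + ‖y*‖²) ≥ q^{2k}/2`. -/
theorem hard_instance_distance_lower_bound
    {d : ℕ} (hd : 1 ≤ d) (α : ℝ) (hα : 0 < α)
    (ω : ℝ) (hω : ω = (Real.sqrt (α ^ 2 + 4) - α) / 2)
    (q : ℝ) (hq : q = (2 + α ^ 2 - α * Real.sqrt (α ^ 2 + 4)) / 2)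
    (xs ys : EuclideanSpace ℝ (Fin d))
    (hxs : xs = fun (i : Fin d) => q ^ ((i : ℕ) + 1))
    (hys : ys = fun (i : Fin d) =>
      ω * (if (i : ℕ) = d - 1 then q ^ d / Real.sqrt (1 - q) else q ^ ((i : ℕ) + 1)))
    (k : ℕ) (hk : 2 * k ≤ d)
    (x y : EuclideanSpace ℝ (Fin d))
    (hx : ∀ i : Fin d, k ≤ (i : ℕ) → x i = 0)
    (hy : ∀ i : Fin d, k ≤ (i : ℕ) → y i = 0) :
    (‖x - xs‖ ^ 2 + ‖y - ys‖ ^ 2) / (‖xs‖ ^ 2 + ‖ys‖ ^ 2) ≥ q ^ (2 * k) / 2 := by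
  have h4 : (0:ℝ) < α ^ 2 + 4 := by positivity
  have hs2 : Real.sqrt (α ^ 2 + 4) ^ 2 = α ^ 2 + 4 := Real.sq_sqrt h4.le
  have hs0 : 0 ≤ Real.sqrt (α ^ 2 + 4) := Real.sqrt_nonneg _
  have hsα : α < Real.sqrt (α ^ 2 + 4) := by nlinarith
  have hq0 : 0 < q := by rw [hq]; nlinarith
  have hq1 : q < 1 := by rw [hq]; nlinarith
  have h1q : 0 < 1 - q := by linarith
  have hωq : ω ^ 2 = q := by rw [hω, hq]; linear_combination hs2 / 4
  -- pointwise values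
  have hxsi : ∀ i : Fin d, xs i = q ^ ((i : ℕ) + 1) := fun i => by rw [hxs]
  have hysi : ∀ i : Fin d, ys i =
      ω * (if (i : ℕ) = d - 1 then q ^ d / Real.sqrt (1 - q) else q ^ ((i : ℕ) + 1)) :=
    fun i => by rw [hys]
  -- norms as sums
  have hnorm : ∀ v : EuclideanSpace ℝ (Fin d), ‖v‖ ^ 2 = ∑ i, v i ^ 2 := by
    intro v
    rw [EuclideanSpace.norm_eq, Real.sq_sqrt (by positivity)]
    simp [Real.norm_eq_abs, sq_abs]
  set g : ℕ → ℝ := fun i =>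
    if i = d - 1 then q ^ (2 * d) / (1 - q) else (1 + q) * q ^ (2 * (i + 1)) with hg
  have hsq : Real.sqrt (1 - q) ^ 2 = 1 - q := Real.sq_sqrt h1q.le
  have hsne : Real.sqrt (1 - q) ≠ 0 := by positivity
  have hA : ∀ i : Fin d, xs i ^ 2 + ys i ^ 2 = g ↑i := by
    intro i
    simp only [hg]
    rw [hxsi, hysi]
    by_cases h : (i : ℕ) = d - 1
    · have hd1 : d - 1 + 1 = d := Nat.succ_pred_eq_of_pos hd
      rw [if_pos h, if_pos h, h, hd1, mul_pow, div_pow, hsq, hωq,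
        show q ^ (2 * d) = (q ^ d) ^ 2 from pow_mul' q 2 d]
      field_simp
      ring
    · simp only [h, if_neg h, if_false]
      rw [mul_pow, hωq,
        show q ^ (2 * ((i : ℕ) + 1)) = (q ^ ((i : ℕ) + 1)) ^ 2 from pow_mul' q 2 _]
      ring
  -- tail sums
  have hm : d - 1 + 1 = d := Nat.succ_pred_eq_of_pos hd
  have htail : ∀ k' ≤ d - 1, ∑ i ∈ Finset.Ico k' d, g i = q ^ (2 * k' + 2) / (1 - q) := by
    intro k' hk'
    have h := tailSum (d - 1) k' q hq0 hq1 hk'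
    rw [hm] at h
    simpa [hg] using h
  -- filter sums on Fin d
  have hfin : ∀ k' : ℕ, ∑ i ∈ Finset.filter (fun i : Fin d => k' ≤ (i : ℕ)) Finset.univ, g ↑i
      = ∑ i ∈ Finset.Ico k' d, g i := by
    intro k'
    rw [Finset.sum_filter]
    rw [Fin.sum_univ_eq_sum_range (fun n => if k' ≤ n then g n else 0) d]
    rw [← Finset.sum_filter]
    congr 1
    ext i
    simp [Finset.mem_Ico, and_comm]
  have hkd : k ≤ d - 1 := by omega
  -- denominator
  have hDen : ‖xs‖ ^ 2 + ‖ys‖ ^ 2 = q ^ 2 / (1 - q) := by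
    rw [hnorm, hnorm, ← Finset.sum_add_distrib]
    calc (∑ i : Fin d, (xs i ^ 2 + ys i ^ 2)) = ∑ i : Fin d, g ↑i :=
          Finset.sum_congr rfl fun i _ => hA i
      _ = ∑ i ∈ Finset.range d, g i := Fin.sum_univ_eq_sum_range g d
      _ = ∑ i ∈ Finset.Ico 0 d, g i := by rw [Finset.range_eq_Ico]
      _ = q ^ (2 * 0 + 2) / (1 - q) := htail 0 (Nat.zero_le _)
      _ = q ^ 2 / (1 - q) := by norm_num
  -- numerator bound
  have hNum : q ^ (2 * k + 2) / (1 - q) ≤ ‖x - xs‖ ^ 2 + ‖y - ys‖ ^ 2 := by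
    rw [hnorm, hnorm, ← Finset.sum_add_distrib]
    calc q ^ (2 * k + 2) / (1 - q) = ∑ i ∈ Finset.Ico k d, g i := (htail k hkd).symm
      _ = ∑ i ∈ Finset.filter (fun i : Fin d => k ≤ (i : ℕ)) Finset.univ, g ↑i := (hfin k).symm
      _ = ∑ i ∈ Finset.filter (fun i : Fin d => k ≤ (i : ℕ)) Finset.univ,
            ((x - xs) i ^ 2 + (y - ys) i ^ 2) := by
          apply Finset.sum_congr rfl
          intro i hi
          have hik : k ≤ (i : ℕ) := (Finset.mem_filter.mp hi).2
          have h1 : (x - xs) i = x i - xs i := rfl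
          have h2 : (y - ys) i = y i - ys i := rfl
          rw [h1, h2, hx i hik, hy i hik, ← hA i]
          ring
      _ ≤ ∑ i : Fin d, ((x - xs) i ^ 2 + (y - ys) i ^ 2) := by
          apply Finset.sum_le_sum_of_subset_of_nonneg (Finset.filter_subset _ _)
          intro i _ _
          positivity
  -- conclude
  have hDpos : (0:ℝ) < ‖xs‖ ^ 2 + ‖ys‖ ^ 2 := by rw [hDen]; positivity
  rw [ge_iff_le, le_div_iff₀ hDpos, hDen]
  have key : q ^ (2 * k) / 2 * (q ^ 2 / (1 - q)) ≤ q ^ (2 * k + 2) / (1 - q) := by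
    have e1 : q ^ (2 * k + 2) / (1 - q) = q ^ (2 * k) * (q ^ 2 / (1 - q)) := by
      rw [pow_add]; ring
    rw [e1]
    have h1 : q ^ (2 * k) / 2 ≤ q ^ (2 * k) := by
      have : (0:ℝ) ≤ q ^ (2 * k) := by positivity
      linarith
    exact mul_le_mul_of_nonneg_right h1 (by positivity)
  linarith
end

section
/- Let L, μ > 0 with L/μ > 2, let n ≥ 1, set L̂ = √(L²/2 − μ²), and define f̂_i : ℝ^n × ℝ^n → ℝ by f̂_i(x, y) = (μ/2)‖x‖² + (√n·L̂/2)(x_i − 1)² − (μ/2)‖y‖² − (√n·L̂/2)(y_i − 1)², and f̂ = (1/n)∑_{i=1}^n f̂_i. Then: (i) f̂ is (μ, μ)-convex-concave; (ii) the family {f̂_i}_{i=1}^n is L-average smooth; (iii) the saddle point of f̂ over ℝ^n × ℝ^n is x* = y* = (L̂/(L̂ + √n·μ))·𝟙, where 𝟙 is the all-ones vector; and (iv) for any (x, y) ∈ ℝ^n × ℝ^n such that both x and y lie in the span of at most n/2 standard basis vectors, ‖x − x*‖² + ‖y − y*‖² ≥ 1/8. -/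
/-!
The objective splits as `F(x, y) = P(x) - P(y)` with `P(z) = μ/2 ‖z‖² + β ‖z - 𝟙‖²` and
`β = L̂ / (2√n)`, so (i) and (iii) reduce to `P` being `μ`-strongly convex with minimiser
`β / (μ/2 + β) • 𝟙 = x*`. The partial gradients of `f̂_i` are `±(μ z + 2κ (z_i - 1) e_i)` with
`κ = √n L̂ / 2`, so the averaged squared gradient differences are exactly
`(μ² + 2μL̂/√n + L̂²) (‖x - x'‖² + ‖y - y'‖²)`, and `2μL̂/√n ≤ μ² + L̂²` while `L² = 2μ² + 2L̂²`.
For (iv), a vector supported on at most `n/2` coordinates misses at least `n/2` coordinates of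
`x*`, each equal to `L̂ / (L̂ + √n μ) ≥ 1 / (2√n)` because `μ ≤ L̂`.
-/

open Set Finset
open scoped Gradient RealInnerProductSpace

section InnerProductSpace

variable {E : Type*} [NormedAddCommGroup E] [InnerProductSpace ℝ E]

theorem convexOn_norm_sub_sq (c : E) : ConvexOn ℝ univ fun z : E => ‖z - c‖ ^ 2 := by
  refine (((convexOn_norm convex_univ).translate_left (-c)).pow
    (fun _ _ => norm_nonneg _) 2).congr fun z _ => ?_
  simp only [Pi.pow_apply, Function.comp_apply, sub_eq_add_neg]

theorem strongConvexOn_mul_norm_sq_add_mul_norm_sub_sq {b : ℝ} (hb : 0 ≤ b) (m d : ℝ) (c : E) :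
    StrongConvexOn univ m fun z : E => m / 2 * ‖z‖ ^ 2 + b * ‖z - c‖ ^ 2 + d := by
  rw [strongConvexOn_iff_convex]
  refine (((convexOn_norm_sub_sq c).smul hb).add_const d).congr fun z _ => ?_
  simp only [Pi.add_apply, smul_eq_mul]
  ring

theorem mul_norm_sq_add_mul_norm_sub_sq_le {a b : ℝ} {c t : E} (hab : 0 ≤ a + b)
    (ht : (a + b) • t = b • c) (z : E) :
    a * ‖t‖ ^ 2 + b * ‖t - c‖ ^ 2 ≤ a * ‖z‖ ^ 2 + b * ‖z - c‖ ^ 2 := by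
  have hz : b * ⟪z, c⟫ = (a + b) * ⟪z, t⟫ := by
    rw [← real_inner_smul_right, ← real_inner_smul_right, ht]
  have ht' : b * ⟪t, c⟫ = (a + b) * ‖t‖ ^ 2 := by
    rw [← real_inner_smul_right, ← ht, real_inner_smul_right, real_inner_self_eq_norm_sq]
  have key : a * ‖z‖ ^ 2 + b * ‖z - c‖ ^ 2
      = a * ‖t‖ ^ 2 + b * ‖t - c‖ ^ 2 + (a + b) * ‖z - t‖ ^ 2 := by
    rw [norm_sub_sq_real, norm_sub_sq_real, norm_sub_sq_real]
    linear_combination (-2) * hz + 2 * ht'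
  rw [key]
  nlinarith [mul_nonneg hab (sq_nonneg ‖z - t‖)]

theorem norm_smul_add_smul_inner_smul_sq {e : E} (he : ‖e‖ = 1) (a c : ℝ) (d : E) :
    ‖a • d + (c * ⟪e, d⟫) • e‖ ^ 2 = a ^ 2 * ‖d‖ ^ 2 + (2 * a * c + c ^ 2) * ⟪e, d⟫ ^ 2 := by
  rw [norm_add_sq_real, norm_smul, norm_smul, real_inner_smul_left, real_inner_smul_right,
    real_inner_comm, he, mul_pow, mul_pow, Real.norm_eq_abs, Real.norm_eq_abs, sq_abs, sq_abs]
  ring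

variable [CompleteSpace E]

theorem hasGradientAt_mul_norm_sq_add_mul_inner_sub_sq (a b r c : ℝ) (e x : E) :
    HasGradientAt (fun u => a / 2 * ‖u‖ ^ 2 + b * (⟪e, u⟫ - r) ^ 2 + c)
      (a • x + (2 * b * (⟪e, x⟫ - r)) • e) x := by
  rw [hasGradientAt_iff_hasFDerivAt]
  have hinner := (((innerSL ℝ e).hasFDerivAt (x := x)).sub_const r).pow 2
  refine ((((hasStrictFDerivAt_norm_sq x).hasFDerivAt.const_mul (a / 2)).add
    (hinner.const_mul b)).add_const c).congr_fderiv ?_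
  ext v
  simp only [coe_innerSL_apply, Nat.add_one_sub_one, pow_one, nsmul_eq_mul, Nat.cast_ofNat,
    add_apply, smul_apply, smul_eq_mul, map_add, map_smul,
    InnerProductSpace.toDual_apply_apply]
  ring

end InnerProductSpace

namespace EuclideanSpace

variable {n : ℕ}

noncomputable def allOnes (n : ℕ) : EuclideanSpace ℝ (Fin n) := WithLp.toLp 2 fun _ => 1

@[simp] theorem allOnes_apply (i : Fin n) : allOnes n i = 1 := rfl

theorem norm_sq_eq_sum_sq (z : EuclideanSpace ℝ (Fin n)) : ‖z‖ ^ 2 = ∑ i, z i ^ 2 := by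
  simp [EuclideanSpace.norm_sq_eq]

theorem hasGradientAt_mul_norm_sq_add_mul_apply_sub_sq (a b r c : ℝ) (i : Fin n)
    (x : EuclideanSpace ℝ (Fin n)) :
    HasGradientAt (fun u : EuclideanSpace ℝ (Fin n) => a / 2 * ‖u‖ ^ 2 + b * (u i - r) ^ 2 + c)
      (a • x + (2 * b * (x i - r)) • single i 1) x := by
  simpa [EuclideanSpace.inner_single_left] using
    hasGradientAt_mul_norm_sq_add_mul_inner_sub_sq a b r c (single i (1 : ℝ)) x

theorem inv_mul_sum_norm_smul_add_smul_single_sq (hn : n ≠ 0) (a c : ℝ)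
    (d : EuclideanSpace ℝ (Fin n)) :
    (n : ℝ)⁻¹ * ∑ i, ‖a • d + (c * d i) • single i 1‖ ^ 2
      = (a ^ 2 + (2 * a * c + c ^ 2) / n) * ‖d‖ ^ 2 := by
  have h i : ‖a • d + (c * d i) • single i (1 : ℝ)‖ ^ 2
      = a ^ 2 * ‖d‖ ^ 2 + (2 * a * c + c ^ 2) * d i ^ 2 := by
    have he : ‖single i (1 : ℝ)‖ = 1 := by simp
    simpa [EuclideanSpace.inner_single_left] using norm_smul_add_smul_inner_smul_sq he a c d
  simp only [h, sum_add_distrib, sum_const, card_univ, Fintype.card_fin, nsmul_eq_mul, ← mul_sum]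
  rw [← norm_sq_eq_sum_sq]
  field_simp

theorem card_compl_mul_sq_le_norm_sub_sq {S : Finset (Fin n)} {z w : EuclideanSpace ℝ (Fin n)}
    {t : ℝ} (hz : ∀ i ∉ S, z i = 0) (hw : ∀ i, w i = t) : #Sᶜ * t ^ 2 ≤ ‖z - w‖ ^ 2 := by
  rw [norm_sq_eq_sum_sq]
  calc (#Sᶜ : ℝ) * t ^ 2 = ∑ i ∈ Sᶜ, (z - w) i ^ 2 := by
        rw [sum_congr rfl fun i hi => by rw [PiLp.sub_apply, hz i (mem_compl.1 hi), hw i],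
          sum_const, nsmul_eq_mul]
        ring
    _ ≤ ∑ i, (z - w) i ^ 2 := sum_le_sum_of_subset_of_nonneg (subset_univ _)
        fun i _ _ => sq_nonneg _

end EuclideanSpace

open EuclideanSpace

section HardInstance

variable {n : ℕ} (μ κ : ℝ)

noncomputable def hardComponent (i : Fin n) (x y : EuclideanSpace ℝ (Fin n)) : ℝ :=
  μ / 2 * ‖x‖ ^ 2 + κ * (x i - 1) ^ 2 - μ / 2 * ‖y‖ ^ 2 - κ * (y i - 1) ^ 2

noncomputable def hardPotential (z : EuclideanSpace ℝ (Fin n)) : ℝ :=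
  μ / 2 * ‖z‖ ^ 2 + κ * ‖z - allOnes n‖ ^ 2

theorem inv_mul_sum_hardComponent (hn : n ≠ 0) (x y : EuclideanSpace ℝ (Fin n)) :
    (n : ℝ)⁻¹ * ∑ i, hardComponent μ κ i x y
      = hardPotential μ (κ / n) x - hardPotential μ (κ / n) y := by
  simp only [hardComponent, hardPotential, norm_sq_eq_sum_sq (_ - allOnes n), PiLp.sub_apply,
    allOnes_apply, sum_sub_distrib, sum_add_distrib, sum_const, card_univ, Fintype.card_fin,
    nsmul_eq_mul, ← mul_sum]
  field_simp
  ring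

theorem gradient_hardComponent_left (i : Fin n) (x y : EuclideanSpace ℝ (Fin n)) :
    ∇ (fun u => hardComponent μ κ i u y) x = μ • x + (2 * κ * (x i - 1)) • single i 1 :=
  ((hasGradientAt_mul_norm_sq_add_mul_apply_sub_sq μ κ 1 (-(μ / 2 * ‖y‖ ^ 2 + κ * (y i - 1) ^ 2))
    i x).congr_of_eventuallyEq (.of_forall fun u => by simp only [hardComponent]; ring)).gradient

theorem gradient_hardComponent_right (i : Fin n) (x y : EuclideanSpace ℝ (Fin n)) :
    ∇ (hardComponent μ κ i x) y = (-μ) • y + (2 * -κ * (y i - 1)) • single i 1 :=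
  ((hasGradientAt_mul_norm_sq_add_mul_apply_sub_sq (-μ) (-κ) 1 (μ / 2 * ‖x‖ ^ 2 + κ * (x i - 1) ^ 2)
    i y).congr_of_eventuallyEq (.of_forall fun v => by simp only [hardComponent]; ring)).gradient

theorem inv_mul_sum_norm_gradient_hardComponent_sub_sq (hn : n ≠ 0)
    (x x' y y' : EuclideanSpace ℝ (Fin n)) :
    (n : ℝ)⁻¹ * ∑ i,
        (‖∇ (fun u => hardComponent μ κ i u y) x - ∇ (fun u => hardComponent μ κ i u y') x'‖ ^ 2 +
          ‖∇ (hardComponent μ κ i x) y - ∇ (hardComponent μ κ i x') y'‖ ^ 2)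
      = (μ ^ 2 + (4 * μ * κ + 4 * κ ^ 2) / n) * (‖x - x'‖ ^ 2 + ‖y - y'‖ ^ 2) := by
  have hdiff (a b : ℝ) (i : Fin n) (z z' : EuclideanSpace ℝ (Fin n)) :
      a • z + (2 * b * (z i - 1)) • single i 1 - (a • z' + (2 * b * (z' i - 1)) • single i 1)
        = a • (z - z') + (2 * b * (z - z') i) • single i (1 : ℝ) := by
    rw [PiLp.sub_apply]; module
  simp only [gradient_hardComponent_left, gradient_hardComponent_right, hdiff,
    sum_add_distrib, mul_add, inv_mul_sum_norm_smul_add_smul_single_sq hn]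
  ring

theorem strongConvexOn_hardPotential_add_const (hκ : 0 ≤ κ) (d : ℝ) :
    StrongConvexOn univ μ fun z : EuclideanSpace ℝ (Fin n) => hardPotential μ κ z + d :=
  strongConvexOn_mul_norm_sq_add_mul_norm_sub_sq hκ μ d (allOnes n)

theorem hardPotential_le {w : EuclideanSpace ℝ (Fin n)} {t : ℝ} (hκ : 0 ≤ μ / 2 + κ)
    (ht : (μ / 2 + κ) * t = κ) (hw : ∀ i, w i = t) (z : EuclideanSpace ℝ (Fin n)) :
    hardPotential μ κ w ≤ hardPotential μ κ z :=
  mul_norm_sq_add_mul_norm_sub_sq_le hκ (by ext i; simp [hw, ht]) z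

end HardInstance

section Constants

variable {n : ℕ} {μ Lh : ℝ}

theorem hard_smoothness_constant_le (hn : 1 ≤ n) (hμ : 0 ≤ μ) (hLh : 0 ≤ Lh) :
    μ ^ 2 + (4 * μ * (√n * Lh / 2) + 4 * (√n * Lh / 2) ^ 2) / n ≤ 2 * μ ^ 2 + 2 * Lh ^ 2 := by
  have hn' : (1 : ℝ) ≤ n := by exact_mod_cast hn
  have hsqrt : (1 : ℝ) ≤ √n := Real.one_le_sqrt.2 hn'
  have hsq : √n ^ 2 = n := Real.sq_sqrt (by positivity)
  have hsqrt_le : √n ≤ n := by nlinarith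
  have hcross : 4 * μ * (√n * Lh / 2) / n ≤ 2 * μ * Lh := by
    rw [div_le_iff₀ (by positivity)]
    nlinarith [mul_le_mul_of_nonneg_left hsqrt_le (mul_nonneg hμ hLh)]
  have hsquare : 4 * (√n * Lh / 2) ^ 2 / n = Lh ^ 2 := by
    rw [div_pow, mul_pow, hsq]
    field_simp
    ring
  rw [add_div, hsquare]
  nlinarith [sq_nonneg (μ - Lh)]

theorem hard_saddle_fixed_point (hn : 1 ≤ n) (hμ : 0 < μ) (hLh : 0 ≤ Lh) :
    (μ / 2 + √n * Lh / 2 / n) * (Lh / (Lh + √n * μ)) = √n * Lh / 2 / n := by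
  have hn' : (0 : ℝ) < n := by exact_mod_cast hn
  have hsq : √n ^ 2 = n := Real.sq_sqrt hn'.le
  have hsqrt_pos : 0 < √n := Real.sqrt_pos.2 hn'
  field_simp
  linear_combination (-μ) * Lh * hsq

theorem one_le_four_mul_hard_saddle_coord_sq (hn : 1 ≤ n) (hμ : 0 < μ) (hμLh : μ ≤ Lh) :
    1 ≤ 4 * n * (Lh / (Lh + √n * μ)) ^ 2 := by
  have hn' : (1 : ℝ) ≤ n := by exact_mod_cast hn
  have hsqrt : (1 : ℝ) ≤ √n := Real.one_le_sqrt.2 hn'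
  have hsq : √n ^ 2 = n := Real.sq_sqrt (by positivity)
  have hden : Lh + √n * μ ≤ 2 * √n * Lh := by nlinarith
  have hpos : 0 < Lh + √n * μ := by nlinarith
  rw [div_pow, mul_div_assoc', le_div_iff₀ (pow_pos hpos 2)]
  nlinarith [pow_le_pow_left₀ hpos.le hden 2]

end Constants

theorem hard_instance_small_condition_number_general
    {n : ℕ} (hn : 1 ≤ n) (L μ : ℝ) (hμ : 0 < μ) (hcond : L / μ > 2)
    (Lh : ℝ) (hLh : Lh = Real.sqrt (L ^ 2 / 2 - μ ^ 2))
    (f : Fin n → EuclideanSpace ℝ (Fin n) → EuclideanSpace ℝ (Fin n) → ℝ)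
    (hf : f = fun i x y =>
      μ / 2 * ‖x‖ ^ 2 + Real.sqrt n * Lh / 2 * (x i - 1) ^ 2
        - μ / 2 * ‖y‖ ^ 2 - Real.sqrt n * Lh / 2 * (y i - 1) ^ 2)
    (F : EuclideanSpace ℝ (Fin n) → EuclideanSpace ℝ (Fin n) → ℝ)
    (hF : F = fun x y => (n : ℝ)⁻¹ * ∑ i, f i x y)
    (xs ys : EuclideanSpace ℝ (Fin n))
    (hxs : xs = fun (_ : Fin n) => Lh / (Lh + Real.sqrt n * μ))
    (hys : ys = fun (_ : Fin n) => Lh / (Lh + Real.sqrt n * μ)) :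
    (∀ y : EuclideanSpace ℝ (Fin n), StrongConvexOn Set.univ μ (fun x => F x y)) ∧
    (∀ x : EuclideanSpace ℝ (Fin n), StrongConcaveOn Set.univ μ (F x)) ∧
    (∀ x x' y y' : EuclideanSpace ℝ (Fin n),
      (n : ℝ)⁻¹ * ∑ i,
          (‖gradient (fun u => f i u y) x - gradient (fun u => f i u y') x'‖ ^ 2 +
            ‖gradient (fun v => f i x v) y - gradient (fun v => f i x' v) y'‖ ^ 2)
        ≤ L ^ 2 * (‖x - x'‖ ^ 2 + ‖y - y'‖ ^ 2)) ∧
    (∀ x y : EuclideanSpace ℝ (Fin n), F xs y ≤ F xs ys ∧ F xs ys ≤ F x ys) ∧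
    (∀ (S : Finset (Fin n)), 2 * S.card ≤ n →
      ∀ x y : EuclideanSpace ℝ (Fin n),
        (∀ i ∉ S, x i = 0) → (∀ i ∉ S, y i = 0) →
        ‖x - xs‖ ^ 2 + ‖y - ys‖ ^ 2 ≥ 1 / 8) := by
  obtain rfl : xs = ys := WithLp.ofLp_injective 2 (hxs.trans hys.symm)
  obtain rfl : f = hardComponent μ (√n * Lh / 2) := hf
  have hn0 : n ≠ 0 := by omega
  have hL : 2 * μ < L := by rwa [gt_iff_lt, lt_div_iff₀ hμ] at hcond
  have hLh_sq : Lh ^ 2 = L ^ 2 / 2 - μ ^ 2 := by rw [hLh, Real.sq_sqrt (by nlinarith)]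
  have hLh_nonneg : 0 ≤ Lh := hLh ▸ Real.sqrt_nonneg _
  have hμLh : μ ≤ Lh := by nlinarith
  have hxs_apply i : xs i = Lh / (Lh + √n * μ) := congrFun hxs i
  set P := hardPotential (n := n) μ (√n * Lh / 2 / n)
  have hβ : 0 ≤ √n * Lh / 2 / n := by positivity
  have hFP x y : F x y = P x - P y := by rw [hF]; exact inv_mul_sum_hardComponent _ _ hn0 x y
  have hP_min z : P xs ≤ P z :=
    hardPotential_le _ _ (by positivity) (hard_saddle_fixed_point hn hμ hLh_nonneg) hxs_apply z
  refine ⟨fun y => ?_, fun x => ?_, fun x x' y y' => ?_, fun x y => ?_,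
    fun S hS x y hx hy => ?_⟩
  · simpa only [hFP, sub_eq_add_neg] using strongConvexOn_hardPotential_add_const μ _ hβ (-P y)
  · rw [show F x = -fun y => P y + -P x from funext fun y => by rw [hFP, Pi.neg_apply]; ring]
    exact (strongConvexOn_hardPotential_add_const μ _ hβ (-P x)).neg
  · rw [inv_mul_sum_norm_gradient_hardComponent_sub_sq _ _ hn0]
    gcongr
    linarith [hard_smoothness_constant_le hn hμ.le hLh_nonneg]
  · simp only [hFP]
    constructor <;> linarith [hP_min x, hP_min y]
  · have hSc : (n : ℝ) ≤ 2 * #Sᶜ := by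
      rw [card_compl, Fintype.card_fin]; exact_mod_cast (by omega : n ≤ 2 * (n - #S))
    have hx' := card_compl_mul_sq_le_norm_sub_sq hx hxs_apply
    have hy' := card_compl_mul_sq_le_norm_sub_sq hy hxs_apply
    nlinarith [one_le_four_mul_hard_saddle_coord_sq hn hμ hμLh]

/-- For `L, μ > 0` with `L/μ > 2`, `n ≥ 1`, `L̂ = √(L²/2 − μ²)`, and
`f̂_i(x,y) = (μ/2)‖x‖² + (√n L̂/2)(x_i − 1)² − (μ/2)‖y‖² − (√n L̂/2)(y_i − 1)²`,
`f̂ = (1/n)∑ f̂_i`: (i) `f̂` is `(μ, μ)`-convex-concave; (ii) `{f̂_i}` is `L`-average smooth;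
(iii) the saddle point of `f̂` is `x* = y* = (L̂/(L̂ + √n μ))𝟙`; (iv) if `x, y` both lie in
the span of at most `n/2` standard basis vectors then `‖x − x*‖² + ‖y − y*‖² ≥ 1/8`. -/
theorem hard_instance_small_condition_number
    {n : ℕ} (hn : 1 ≤ n) (L μ : ℝ) (hμ : 0 < μ) (hL : 0 < L) (hcond : L / μ > 2)
    (Lh : ℝ) (hLh : Lh = Real.sqrt (L ^ 2 / 2 - μ ^ 2))
    (f : Fin n → EuclideanSpace ℝ (Fin n) → EuclideanSpace ℝ (Fin n) → ℝ)
    (hf : f = fun i x y =>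
      μ / 2 * ‖x‖ ^ 2 + Real.sqrt n * Lh / 2 * (x i - 1) ^ 2
        - μ / 2 * ‖y‖ ^ 2 - Real.sqrt n * Lh / 2 * (y i - 1) ^ 2)
    (F : EuclideanSpace ℝ (Fin n) → EuclideanSpace ℝ (Fin n) → ℝ)
    (hF : F = fun x y => (n : ℝ)⁻¹ * ∑ i, f i x y)
    (xs ys : EuclideanSpace ℝ (Fin n))
    (hxs : xs = fun (_ : Fin n) => Lh / (Lh + Real.sqrt n * μ))
    (hys : ys = fun (_ : Fin n) => Lh / (Lh + Real.sqrt n * μ)) :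
    (∀ y : EuclideanSpace ℝ (Fin n), StrongConvexOn Set.univ μ (fun x => F x y)) ∧
    (∀ x : EuclideanSpace ℝ (Fin n), StrongConcaveOn Set.univ μ (F x)) ∧
    (∀ x x' y y' : EuclideanSpace ℝ (Fin n),
      (n : ℝ)⁻¹ * ∑ i,
          (‖gradient (fun u => f i u y) x - gradient (fun u => f i u y') x'‖ ^ 2 +
            ‖gradient (fun v => f i x v) y - gradient (fun v => f i x' v) y'‖ ^ 2)
        ≤ L ^ 2 * (‖x - x'‖ ^ 2 + ‖y - y'‖ ^ 2)) ∧
    (∀ x y : EuclideanSpace ℝ (Fin n), F xs y ≤ F xs ys ∧ F xs ys ≤ F x ys) ∧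
    (∀ (S : Finset (Fin n)), 2 * S.card ≤ n →
      ∀ x y : EuclideanSpace ℝ (Fin n),
        (∀ i ∉ S, x i = 0) → (∀ i ∉ S, y i = 0) →
        ‖x - xs‖ ^ 2 + ‖y - ys‖ ^ 2 ≥ 1 / 8) :=
  hard_instance_small_condition_number_general hn L μ hμ hcond Lh hLh f hf F hF xs ys hxs hys
end
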